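/- arXiv:1110.0106 — 2 statements merged into one kernel-verified Lean document; each statement's English description precedes it below -/
import Mathlib

section
/- For any α ∈ ℂ with α⁴ − 2α³ + 2α² + 2α + 1 = 0, the line l₃ in ℙ³ spanned by (α:1:0:0) and (0:0:α:1) lies on Maschke's octic surface: F(αs, s, αt, t) = 0 for all s, t ∈ ℂ. -/
/-! On the line, `F` restricts to `(α⁸ + 14α⁴ + 1) · (s⁸ + 14s⁴t⁴ + t⁸)`, and
`α⁸ + 14α⁴ + 1` factors as `q(α) · q(-α)` with `q(α) = α⁴ − 2α³ + 2α² + 2α + 1`. -/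

/-- Maschke's octic polynomial, as a function on `ℂ⁴`. -/
def F (x0 x1 x2 x3 : ℂ) : ℂ :=
  x0 ^ 8 + x1 ^ 8 + x2 ^ 8 + x3 ^ 8 +
    14 * (x0 ^ 4 * x1 ^ 4 + x0 ^ 4 * x2 ^ 4 + x0 ^ 4 * x3 ^ 4 +
          x1 ^ 4 * x2 ^ 4 + x1 ^ 4 * x3 ^ 4 + x2 ^ 4 * x3 ^ 4) +
    168 * (x0 ^ 2 * x1 ^ 2 * x2 ^ 2 * x3 ^ 2)

theorem F_mul_left_mul_left (a s t : ℂ) :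
    F (a * s) s (a * t) t = (a ^ 8 + 14 * a ^ 4 + 1) * (s ^ 8 + 14 * s ^ 4 * t ^ 4 + t ^ 8) := by
  unfold F
  ring

theorem pow_eight_add_mul_pow_four_add_one_eq {R : Type*} [CommRing R] (a : R) :
    a ^ 8 + 14 * a ^ 4 + 1 =
      (a ^ 4 - 2 * a ^ 3 + 2 * a ^ 2 + 2 * a + 1) *
        ((-a) ^ 4 - 2 * (-a) ^ 3 + 2 * (-a) ^ 2 + 2 * (-a) + 1) := by
  ring

/-- For any `α ∈ ℂ` with `α⁴ − 2α³ + 2α² + 2α + 1 = 0`, the line `l₃` spanned by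
`(α:1:0:0)` and `(0:0:α:1)` lies on Maschke's octic surface:
`F(αs, s, αt, t) = 0` for all `s, t ∈ ℂ`. -/
theorem line_l3_on_maschke_octic (α : ℂ)
    (hα : α ^ 4 - 2 * α ^ 3 + 2 * α ^ 2 + 2 * α + 1 = 0) (s t : ℂ) :
    F (α * s) s (α * t) t = 0 := by
  rw [F_mul_left_mul_left, pow_eight_add_mul_pow_four_add_one_eq, hα, zero_mul, zero_mul]
end

section
/- For (x,y) ∈ ℂ², the following are equivalent: (i) the line l_{(x,y)} parametrized by t ↦ (x,1,ty,t) lies entirely in Maschke's octic surface, i.e. F(x,1,ty,t) = 0 for all t ∈ ℂ; (ii) A(y) = B(x,y) = C(x) = 0; (iii) x⁸ + 14x⁴ + 1 = 0 and (y² = x² or x²y² = 1); (iv) g₊(x,y) = 0 and g₋(x,y) = 0. -/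
/-- `A := y⁸ + 14y⁴ + 1`. -/
def A (y : ℂ) : ℂ := y ^ 8 + 14 * y ^ 4 + 1

/-- `B := 14(x⁴y⁴ + x⁴ + y⁴ + 12x²y² + 1)`. -/
def B (x y : ℂ) : ℂ := 14 * (x ^ 4 * y ^ 4 + x ^ 4 + y ^ 4 + 12 * x ^ 2 * y ^ 2 + 1)

/-- `C := x⁸ + 14x⁴ + 1`. -/
def C' (x : ℂ) : ℂ := x ^ 8 + 14 * x ^ 4 + 1

/-- `g₊(x,y) := (2y⁴ + y² + 2)x⁴ − (y⁴ − 24y² + 1)x² + 2y⁴ + y² + 2`. -/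
def gPlus (x y : ℂ) : ℂ :=
  (2 * y ^ 4 + y ^ 2 + 2) * x ^ 4 - (y ^ 4 - 24 * y ^ 2 + 1) * x ^ 2 +
    2 * y ^ 4 + y ^ 2 + 2

/-- `g₋(x,y) := (2y⁴ − y² + 2)x⁴ + (y⁴ + 24y² + 1)x² + 2y⁴ − y² + 2`. -/
def gMinus (x y : ℂ) : ℂ :=
  (2 * y ^ 4 - y ^ 2 + 2) * x ^ 4 + (y ^ 4 + 24 * y ^ 2 + 1) * x ^ 2 +
    2 * y ^ 4 - y ^ 2 + 2


/-!
Along the line, `F(x, 1, ty, t) = A(y) t⁸ + B(x,y) t⁴ + C(x)`, a quadratic polynomial in `t⁴`;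
since every complex number is a fourth power, it vanishes identically iff `A = B = C = 0`.
All remaining conditions depend only on `u = x²` and `v = y²`. On the branch `v = u` one has
`A = C`, `B = 14 C` and `g₊ = g₋ = 2 C`; on the branch `uv = 1` the reciprocity of
`u⁴ + 14u² + 1` gives `x⁸ A = C`, `x⁴ B = 14 C` and `x⁴ g₊ = x⁴ g₋ = 2 C`. Conversely
`g₊ - g₋ = 2 (u - v)(uv - 1)`, and `A - C = (v - u)(v + u)(u² + v² + 14)` together with
`B = C = 0` rules out everything but the two branches.
-/

theorem coeffs_eq_zero_of_forall_quadratic_eq_zero {K : Type*} [Field K] [NeZero (2 : K)]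
    {a b c : K} (h : ∀ u, a * u ^ 2 + b * u + c = 0) : a = 0 ∧ b = 0 ∧ c = 0 := by
  have h0 := h 0
  have h1 := h 1
  have h2 := h (-1)
  have hc : c = 0 := by linear_combination h0
  have h2a : 2 * a = 0 := by linear_combination h1 + h2 - 2 * h0
  have ha : a = 0 := (mul_eq_zero.mp h2a).resolve_left two_ne_zero
  exact ⟨ha, by linear_combination h1 - h0 - ha, hc⟩

theorem coeffs_eq_zero_of_forall_eq_zero_pow {K : Type*} [Field K] [IsAlgClosed K]
    [NeZero (2 : K)] {n : ℕ} (hn : n ≠ 0) {a b c : K}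
    (h : ∀ t, a * t ^ (2 * n) + b * t ^ n + c = 0) : a = 0 ∧ b = 0 ∧ c = 0 := by
  refine coeffs_eq_zero_of_forall_quadratic_eq_zero fun u => ?_
  obtain ⟨t, rfl⟩ := IsAlgClosed.exists_pow_nat_eq u (Nat.pos_of_ne_zero hn)
  simpa only [← pow_mul, mul_comm n 2] using h t

theorem F_along_line (x y t : ℂ) :
    F x 1 (t * y) t = A y * t ^ 8 + B x y * t ^ 4 + C' x := by
  unfold F A B C'
  ring

section Branches

variable {x y : ℂ}

theorem ne_zero_of_mul_sq_eq_one (h : x ^ 2 * y ^ 2 = 1) : x ≠ 0 := by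
  rintro rfl
  simp at h

theorem A_eq_C'_of_sq_eq (h : y ^ 2 = x ^ 2) : A y = C' x := by
  unfold A C'
  linear_combination (y ^ 6 + y ^ 4 * x ^ 2 + y ^ 2 * x ^ 4 + x ^ 6 + 14 * y ^ 2 + 14 * x ^ 2) * h

theorem B_eq_of_sq_eq (h : y ^ 2 = x ^ 2) : B x y = 14 * C' x := by
  unfold B C'
  linear_combination 14 * (x ^ 4 * y ^ 2 + x ^ 6 + y ^ 2 + 13 * x ^ 2) * h

theorem gPlus_eq_of_sq_eq (h : y ^ 2 = x ^ 2) : gPlus x y = 2 * C' x := by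
  unfold gPlus C'
  linear_combination (2 * x ^ 4 * (y ^ 2 + x ^ 2) + x ^ 4 - x ^ 2 * (y ^ 2 + x ^ 2) +
    24 * x ^ 2 + 2 * (y ^ 2 + x ^ 2) + 1) * h

theorem gMinus_eq_of_sq_eq (h : y ^ 2 = x ^ 2) : gMinus x y = 2 * C' x := by
  unfold gMinus C'
  linear_combination (2 * x ^ 4 * (y ^ 2 + x ^ 2) - x ^ 4 + x ^ 2 * (y ^ 2 + x ^ 2) +
    24 * x ^ 2 + 2 * (y ^ 2 + x ^ 2) - 1) * h

theorem pow_eight_mul_A_of_mul_sq_eq_one (h : x ^ 2 * y ^ 2 = 1) : x ^ 8 * A y = C' x := by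
  unfold A C'
  linear_combination (x ^ 6 * y ^ 6 + x ^ 4 * y ^ 4 + x ^ 2 * y ^ 2 + 1 +
    14 * x ^ 4 * (x ^ 2 * y ^ 2 + 1)) * h

theorem pow_four_mul_B_of_mul_sq_eq_one (h : x ^ 2 * y ^ 2 = 1) :
    x ^ 4 * B x y = 14 * C' x := by
  unfold B C'
  linear_combination 14 * ((x ^ 4 + 1) * (x ^ 2 * y ^ 2 + 1) + 12 * x ^ 4) * h

theorem pow_four_mul_gPlus_of_mul_sq_eq_one (h : x ^ 2 * y ^ 2 = 1) :
    x ^ 4 * gPlus x y = 2 * C' x := by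
  unfold gPlus C'
  linear_combination (2 * x ^ 4 * (x ^ 2 * y ^ 2 + 1) + x ^ 6 - x ^ 2 * (x ^ 2 * y ^ 2 + 1) +
    24 * x ^ 4 + 2 * (x ^ 2 * y ^ 2 + 1) + x ^ 2) * h

theorem pow_four_mul_gMinus_of_mul_sq_eq_one (h : x ^ 2 * y ^ 2 = 1) :
    x ^ 4 * gMinus x y = 2 * C' x := by
  unfold gMinus C'
  linear_combination (2 * x ^ 4 * (x ^ 2 * y ^ 2 + 1) - x ^ 6 + x ^ 2 * (x ^ 2 * y ^ 2 + 1) +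
    24 * x ^ 4 + 2 * (x ^ 2 * y ^ 2 + 1) - x ^ 2) * h

theorem gPlus_sub_gMinus (x y : ℂ) :
    gPlus x y - gMinus x y = 2 * ((x ^ 2 - y ^ 2) * (x ^ 2 * y ^ 2 - 1)) := by
  unfold gPlus gMinus
  ring

theorem A_sub_C' (x y : ℂ) :
    A y - C' x = (y ^ 2 - x ^ 2) * (y ^ 2 + x ^ 2) * (y ^ 4 + x ^ 4 + 14) := by
  unfold A C'
  ring

theorem sq_eq_or_mul_sq_eq_one_of_A_B_C' (hA : A y = 0) (hB : B x y = 0) (hC : C' x = 0) :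
    y ^ 2 = x ^ 2 ∨ x ^ 2 * y ^ 2 = 1 := by
  have hAC : (y ^ 2 - x ^ 2) * (y ^ 2 + x ^ 2) * (y ^ 4 + x ^ 4 + 14) = 0 := by
    rw [← A_sub_C', hA, hC, sub_zero]
  unfold B at hB
  unfold C' at hC
  rcases mul_eq_zero.mp hAC with hsq | h14
  · rcases mul_eq_zero.mp hsq with hsub | hadd
    · exact Or.inl (sub_eq_zero.mp hsub)
    · -- on `y² = -x²`, `B/14 = C - 24x⁴`, so `x = 0`, but `C(0) = 1`
      exfalso
      have hx : x ^ 4 = 0 := by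
        linear_combination hC / 24 - hB / 336 +
          ((x ^ 4 * (y ^ 2 - x ^ 2) + y ^ 2 - x ^ 2 + 12 * x ^ 2) / 24) * hadd
      exact one_ne_zero (by linear_combination hC - (x ^ 4 + 14) * hx : (1 : ℂ) = 0)
  · have h13 : (x ^ 2 * y ^ 2 - 1) * (x ^ 2 * y ^ 2 + 13) = 0 := by
      linear_combination hB / 14 - h14
    refine Or.inr (sub_eq_zero.mp ((mul_eq_zero.mp h13).resolve_right fun h13 => ?_))
    -- `x⁴ (x⁴ + y⁴ + 14) - C = x⁴y⁴ - 1`, which is `168` when `x²y² = -13`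
    have : (168 : ℂ) = 0 := by
      linear_combination x ^ 4 * h14 - hC - (x ^ 2 * y ^ 2 - 13) * h13
    norm_num at this

end Branches

theorem A_B_C'_eq_zero_iff (x y : ℂ) :
    A y = 0 ∧ B x y = 0 ∧ C' x = 0 ↔ C' x = 0 ∧ (y ^ 2 = x ^ 2 ∨ x ^ 2 * y ^ 2 = 1) := by
  refine ⟨fun ⟨hA, hB, hC⟩ => ⟨hC, sq_eq_or_mul_sq_eq_one_of_A_B_C' hA hB hC⟩, ?_⟩
  rintro ⟨hC, h | h⟩
  · simp [A_eq_C'_of_sq_eq h, B_eq_of_sq_eq h, hC]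
  · have hx := ne_zero_of_mul_sq_eq_one h
    have hA := pow_eight_mul_A_of_mul_sq_eq_one h
    have hB := pow_four_mul_B_of_mul_sq_eq_one h
    simp_all

theorem gPlus_gMinus_eq_zero_iff (x y : ℂ) :
    gPlus x y = 0 ∧ gMinus x y = 0 ↔ C' x = 0 ∧ (y ^ 2 = x ^ 2 ∨ x ^ 2 * y ^ 2 = 1) := by
  constructor
  · rintro ⟨hp, hm⟩
    have h : (x ^ 2 - y ^ 2) * (x ^ 2 * y ^ 2 - 1) = 0 := by
      simpa [hp, hm] using gPlus_sub_gMinus x y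
    rcases mul_eq_zero.mp h with h | h
    · have h : y ^ 2 = x ^ 2 := (sub_eq_zero.mp h).symm
      exact ⟨by simpa [hp] using gPlus_eq_of_sq_eq h, Or.inl h⟩
    · have h : x ^ 2 * y ^ 2 = 1 := sub_eq_zero.mp h
      exact ⟨by simpa [hp] using pow_four_mul_gPlus_of_mul_sq_eq_one h, Or.inr h⟩
  · rintro ⟨hC, h | h⟩
    · simp [gPlus_eq_of_sq_eq h, gMinus_eq_of_sq_eq h, hC]
    · have hx := ne_zero_of_mul_sq_eq_one h
      have hp := pow_four_mul_gPlus_of_mul_sq_eq_one h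
      have hm := pow_four_mul_gMinus_of_mul_sq_eq_one h
      simp_all

/-- For `(x,y) ∈ ℂ²` the following are equivalent: (i) the line `l_{(x,y)}` parametrized
by `t ↦ (x,1,ty,t)` lies entirely in Maschke's octic surface; (ii) `A = B = C = 0`;
(iii) `x⁸ + 14x⁴ + 1 = 0` and (`y² = x²` or `x²y² = 1`); (iv) `g₊ = g₋ = 0`. -/
theorem lines_in_maschke_octic (x y : ℂ) :
    [∀ t : ℂ, F x 1 (t * y) t = 0,
     A y = 0 ∧ B x y = 0 ∧ C' x = 0,
     x ^ 8 + 14 * x ^ 4 + 1 = 0 ∧ (y ^ 2 = x ^ 2 ∨ x ^ 2 * y ^ 2 = 1),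
     gPlus x y = 0 ∧ gMinus x y = 0].TFAE := by
  tfae_have 1 ↔ 2 := by
    simp only [F_along_line]
    refine ⟨coeffs_eq_zero_of_forall_eq_zero_pow (n := 4) four_ne_zero, ?_⟩
    rintro ⟨hA, hB, hC⟩ t
    simp [hA, hB, hC]
  tfae_have 2 ↔ 3 := A_B_C'_eq_zero_iff x y
  tfae_have 4 ↔ 3 := gPlus_gMinus_eq_zero_iff x y
  tfae_finish
end
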